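/- Let f ∈ ℋ admit the nontangential Taylor expansion f(z) = Σ_{i=0}^{p} (a_i/i!) z^i + o(z^p) at 0. Then for each i = 0,...,p, the derivative f^{(i)}(z) has nontangential limit a_i as z → 0. -/

import Mathlib

open Filter Set

/-- The truncated cone `Δ_{α,β} = {z = x+iy : |x| < -αy, |z| < β}`. -/
def Delta (α β : ℝ) : Set ℂ :=
  {z : ℂ | |z.re| < -α * z.im ∧ ‖z‖ < β}

lemma Delta_ne_zero {α β : ℝ} {z : ℂ} (hz : z ∈ Delta α β) : z ≠ 0 := by
  rintro rfl
  simpa [Delta] using hz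

lemma mem_Delta_double {α β : ℝ} (hα : 0 < α) {z w : ℂ}
    (hz : |z.re| < -α * z.im)
    (hw : ‖w - z‖ ≤ α / ((α + 1) * (1 + 2 * α)) * ‖z‖)
    (hwβ : ‖w‖ < β) :
    w ∈ Delta (2 * α) β := by
  set c : ℝ := α / ((α + 1) * (1 + 2 * α)) with hc
  have hd1 : (0 : ℝ) < (α + 1) * (1 + 2 * α) := by positivity
  have hcc : c * ((α + 1) * (1 + 2 * α)) = α := div_mul_cancel₀ _ hd1.ne'
  have hc0 : 0 < c := by positivity
  have hy : 0 < -z.im := by nlinarith [abs_nonneg z.re]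
  have habs : ‖z‖ < (α + 1) * (-z.im) := by
    have h1 := Complex.norm_le_abs_re_add_abs_im z
    have h2 : |z.im| = -z.im := abs_of_neg (by linarith)
    nlinarith
  have hre : |w.re| ≤ |z.re| + ‖w - z‖ := by
    have h1 : |(w - z).re| ≤ ‖w - z‖ := Complex.abs_re_le_norm _
    have h2 : |w.re| ≤ |z.re| + |w.re - z.re| := by
      have := abs_add_le z.re (w.re - z.re)
      simpa using this
    simp only [Complex.sub_re] at h1
    linarith
  have him : -z.im - ‖w - z‖ ≤ -w.im := by
    have h1 : |(w - z).im| ≤ ‖w - z‖ := Complex.abs_im_le_norm _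
    simp only [Complex.sub_im] at h1
    have := abs_le.mp h1
    linarith
  have hcz : c * (1 + 2 * α) * ‖z‖ < α * (-z.im) := by
    nlinarith [mul_lt_mul_of_pos_left habs (by positivity : (0:ℝ) < c * (1 + 2 * α))]
  refine ⟨?_, hwβ⟩
  show |w.re| < -(2 * α) * w.im
  have hd0 : 0 ≤ ‖w - z‖ := norm_nonneg _
  nlinarith [mul_le_mul_of_nonneg_left hw (by linarith : (0:ℝ) ≤ 1 + 2 * α),
    mul_le_mul_of_nonneg_left him hα.le]

lemma key_step {D : Set ℂ} {v : ℂ → ℂ} (hv : DifferentiableOn ℂ v D)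
    {α β : ℝ} (hα : 0 < α) (hβ : 0 < β) (hsub : Delta (2 * α) β ⊆ D) (k : ℕ)
    (h : Tendsto (fun z => v z / z ^ (k + 1)) (nhdsWithin 0 (Delta (2 * α) β)) (nhds 0)) :
    ∃ β' > 0, Delta α β' ⊆ Delta (2 * α) β ∧
      Tendsto (fun z => deriv v z / z ^ k) (nhdsWithin 0 (Delta α β')) (nhds 0) := by
  set c : ℝ := α / ((α + 1) * (1 + 2 * α)) with hcdef
  have hc0 : 0 < c := by positivity
  have h1c : 0 < 1 + c := by linarith
  have hsub' : Delta α (β / (1 + c)) ⊆ Delta (2 * α) β := by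
    intro z hz
    refine mem_Delta_double hα hz.1 (by rw [sub_self, norm_zero]; positivity) ?_
    calc ‖z‖ < β / (1 + c) := hz.2
      _ ≤ β := div_le_self hβ.le (by linarith)
  refine ⟨β / (1 + c), by positivity, hsub', ?_⟩
  rw [Metric.tendsto_nhdsWithin_nhds] at h ⊢
  intro ε hε
  have hε₁ : 0 < ε * c / (2 * (1 + c) ^ (k + 1)) := by positivity
  obtain ⟨δ₁, hδ₁, H⟩ := h _ hε₁
  set ε₁ : ℝ := ε * c / (2 * (1 + c) ^ (k + 1)) with hε₁def
  refine ⟨min (β / (1 + c)) (δ₁ / (1 + c)), by positivity, ?_⟩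
  intro z hz hzd
  have hzne : z ≠ 0 := Delta_ne_zero hz
  have hza : 0 < ‖z‖ := norm_pos_iff.mpr hzne
  set r : ℝ := c * ‖z‖ with hrdef
  have hr0 : 0 < r := by positivity
  have hzβ : ‖z‖ < β / (1 + c) := hz.2
  have hzδ : ‖z‖ < δ₁ / (1 + c) := by
    have : dist z 0 < δ₁ / (1 + c) := lt_of_lt_of_le hzd (min_le_right _ _)
    simpa [Complex.dist_eq] using this
  have hball : Metric.closedBall z r ⊆ Delta (2 * α) β := by
    intro w hw
    have hwz : ‖w - z‖ ≤ r := by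
      simpa [Complex.dist_eq] using (Metric.mem_closedBall.mp hw)
    refine mem_Delta_double hα hz.1 hwz ?_
    have : ‖w‖ ≤ ‖z‖ + ‖w - z‖ := by
      simpa using norm_add_le z (w - z)
    have h2 : ‖w‖ ≤ (1 + c) * ‖z‖ := by
      rw [hrdef] at hwz; nlinarith
    calc ‖w‖ ≤ (1 + c) * ‖z‖ := h2
      _ < (1 + c) * (β / (1 + c)) := by exact (mul_lt_mul_iff_right₀ h1c).mpr hzβ
      _ = β := by field_simp
  have hdiff : DiffContOnCl ℂ v (Metric.ball z r) := by
    apply DifferentiableOn.diffContOnCl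
    rw [closure_ball z hr0.ne']
    exact hv.mono (hball.trans hsub)
  have hCb : ∀ w ∈ Metric.sphere z r, ‖v w‖ ≤ ε₁ * ((1 + c) * ‖z‖) ^ (k + 1) := by
    intro w hw
    have hwmem : w ∈ Delta (2 * α) β := hball (Metric.sphere_subset_closedBall hw)
    have hwne : w ≠ 0 := Delta_ne_zero hwmem
    have hwa : 0 < ‖w‖ := norm_pos_iff.mpr hwne
    have hwz : ‖w - z‖ = r := by
      simpa [Complex.dist_eq] using (Metric.mem_sphere.mp hw)
    have hwle : ‖w‖ ≤ (1 + c) * ‖z‖ := by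
      have : ‖w‖ ≤ ‖z‖ + ‖w - z‖ := by
        simpa using norm_add_le z (w - z)
      rw [hwz, hrdef] at this; nlinarith
    have hwδ : dist w 0 < δ₁ := by
      rw [Complex.dist_eq, sub_zero]
      calc ‖w‖ ≤ (1 + c) * ‖z‖ := hwle
        _ < (1 + c) * (δ₁ / (1 + c)) := (mul_lt_mul_iff_right₀ h1c).mpr hzδ
        _ = δ₁ := by field_simp
    have hH := H hwmem hwδ
    simp only [dist_zero_right, norm_div, norm_pow] at hH
    have hvw : ‖v w‖ ≤ ε₁ * ‖w‖ ^ (k + 1) := by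
      have := (div_lt_iff₀ (by positivity : (0:ℝ) < ‖w‖ ^ (k+1))).mp hH
      linarith
    calc ‖v w‖ ≤ ε₁ * ‖w‖ ^ (k + 1) := hvw
      _ ≤ ε₁ * ((1 + c) * ‖z‖) ^ (k + 1) := by
        apply mul_le_mul_of_nonneg_left _ hε₁.le
        exact pow_le_pow_left₀ hwa.le hwle _
  have hC := Complex.norm_deriv_le_of_forall_mem_sphere_norm_le hr0 hdiff hCb
  simp only [dist_zero_right, norm_div, norm_pow]
  have hbound : ε₁ * ((1 + c) * ‖z‖) ^ (k + 1) / r / ‖z‖ ^ k = ε / 2 := by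
    rw [hε₁def, hrdef, mul_pow, pow_succ (‖z‖)]
    field_simp
  calc ‖deriv v z‖ / ‖z‖ ^ k
      ≤ ε₁ * ((1 + c) * ‖z‖) ^ (k + 1) / r / ‖z‖ ^ k := by
        apply div_le_div_of_nonneg_right ?_ (by positivity)
        exact hC
    _ = ε / 2 := hbound
    _ < ε := by linarith

lemma poly_deriv (b : ℕ → ℂ) (m : ℕ) :
    deriv (fun z : ℂ => ∑ j ∈ Finset.range (m + 1), b j / (Nat.factorial j) * z ^ j)
      = fun z => ∑ j ∈ Finset.range m, b (j + 1) / (Nat.factorial j) * z ^ j := by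
  funext z
  rw [deriv_fun_sum (fun j _ => (differentiableAt_pow j).const_mul _)]
  have hterm : ∀ j : ℕ, deriv (fun z : ℂ => b j / (Nat.factorial j) * z ^ j) z
      = b j / (Nat.factorial j) * ((j : ℂ) * z ^ (j - 1)) := by
    intro j
    rw [deriv_const_mul _ (differentiableAt_pow j), deriv_pow_field]
  simp only [hterm]
  rw [Finset.sum_range_succ']
  simp only [Nat.cast_zero, zero_mul, mul_zero, add_zero]
  refine Finset.sum_congr rfl fun j _ => ?_
  have hfac : ((Nat.factorial (j + 1) : ℂ)) = (j + 1) * (Nat.factorial j) := by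
    push_cast [Nat.factorial_succ]; ring
  have hjne : ((j : ℂ) + 1) ≠ 0 := Nat.cast_add_one_ne_zero j
  have hfne : ((Nat.factorial j : ℂ)) ≠ 0 := by
    exact_mod_cast Nat.cast_ne_zero.mpr (Nat.factorial_ne_zero j)
  rw [hfac]
  push_cast
  field_simp

lemma poly_iter (a : ℕ → ℂ) (p : ℕ) : ∀ i ≤ p,
    deriv^[i] (fun z : ℂ => ∑ j ∈ Finset.range (p + 1), a j / (Nat.factorial j) * z ^ j)
      = fun z => ∑ j ∈ Finset.range (p - i + 1), a (i + j) / (Nat.factorial j) * z ^ j := by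
  intro i
  induction i with
  | zero => intro _; simp
  | succ i ih =>
    intro hip
    obtain ⟨m, hm⟩ : ∃ m, p - i = m + 1 := ⟨p - (i + 1), by omega⟩
    rw [Function.iterate_succ_apply', ih (by omega), hm, poly_deriv]
    have hm2 : p - (i + 1) = m := by omega
    rw [hm2]
    funext z
    refine Finset.sum_congr rfl fun j _ => ?_
    have hidx : i + (j + 1) = i + 1 + j := by omega
    rw [hidx]

lemma poly_val (b : ℕ → ℂ) (m : ℕ) :
    (∑ j ∈ Finset.range (m + 1), b j / (Nat.factorial j) * (0 : ℂ) ^ j) = b 0 := by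
  rw [Finset.sum_eq_single_of_mem 0 (Finset.mem_range.mpr (Nat.succ_pos m))]
  · simp
  · intro j _ hj
    simp [zero_pow hj]

lemma iterDW_open {D : Set ℂ} (hD : IsOpen D) {f : ℂ → ℂ} (n : ℕ) {z : ℂ} (hz : z ∈ D) :
    iteratedDerivWithin n f D z = iteratedDeriv n f z := by
  rw [iteratedDerivWithin_eq_iteratedFDerivWithin, iteratedDeriv_eq_iteratedFDeriv,
    iteratedFDerivWithin_of_isOpen n hD hz]

/-- Converse Taylor formula in `ℋ`: if `f ∈ ℋ` admits the nontangential Taylor expansion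
`f(z) = ∑_{i=0}^p (aᵢ/i!) zⁱ + o(z^p)` at `0`, then each derivative `f⁽ⁱ⁾` (`i ≤ p`)
has nontangential limit `aᵢ` at `0`. -/
theorem deriv_limits_of_taylor_expansion
    (D : Set ℂ) (hD : IsOpen D) (f : ℂ → ℂ) (hf : DifferentiableOn ℂ f D)
    (hcone : ∀ α > (0:ℝ), ∃ β > (0:ℝ), Delta α β ⊆ D)
    (p : ℕ) (a : ℕ → ℂ)
    (hexp : ∀ α > (0:ℝ), ∃ β > (0:ℝ), Delta α β ⊆ D ∧
      Tendsto
        (fun z : ℂ => (f z - ∑ i ∈ Finset.range (p + 1), a i / (Nat.factorial i) * z ^ i) / z ^ p)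
        (nhdsWithin 0 (Delta α β)) (nhds 0)) :
    ∀ i ≤ p, ∀ α > (0:ℝ), ∃ β > (0:ℝ), Delta α β ⊆ D ∧
      Tendsto (iteratedDerivWithin i f D) (nhdsWithin 0 (Delta α β)) (nhds (a i)) := by
  set P : ℂ → ℂ := fun z => ∑ j ∈ Finset.range (p + 1), a j / (Nat.factorial j) * z ^ j with hPdef
  set g : ℂ → ℂ := fun z => f z - P z with hgdef
  have hPdiff : Differentiable ℂ P :=
    Differentiable.fun_sum fun j _ => (differentiable_pow j).const_mul _
  have hPcont : ∀ n : ℕ, ContDiff ℂ (n : ℕ) P := fun n =>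
    ContDiff.sum fun j _ => ((contDiff_const (c := a j / (Nat.factorial j : ℂ))).mul (contDiff_id.pow j))
  have hg : DifferentiableOn ℂ g D := hf.sub hPdiff.differentiableOn
  have hga : AnalyticOnNhd ℂ g D := hg.analyticOnNhd hD
  have hiter : ∀ n : ℕ, AnalyticOnNhd ℂ (deriv^[n] g) D := by
    intro n
    induction n with
    | zero => exact hga
    | succ n ih =>
      rw [Function.iterate_succ_apply']
      exact ih.deriv
  have main : ∀ i, i ≤ p → ∀ α, 0 < α → ∃ β > (0:ℝ), Delta α β ⊆ D ∧
      Tendsto (fun z => deriv^[i] g z / z ^ (p - i)) (nhdsWithin 0 (Delta α β)) (nhds 0) := by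
    intro i
    induction i with
    | zero =>
      intro _ α hα
      obtain ⟨β, hβ, hsub, ht⟩ := hexp α hα
      exact ⟨β, hβ, hsub, ht⟩
    | succ i ih =>
      intro hip α hα
      obtain ⟨β, hβ, hsub, ht⟩ := ih (Nat.le_of_succ_le hip) (2 * α) (by positivity)
      have hk : p - i = (p - (i + 1)) + 1 := by omega
      rw [hk] at ht
      obtain ⟨β', hβ', hsub', ht'⟩ :=
        key_step ((hiter i).differentiableOn) hα hβ hsub (p - (i + 1)) ht
      refine ⟨β', hβ', hsub'.trans hsub, ?_⟩
      have : (fun z => deriv (deriv^[i] g) z / z ^ (p - (i + 1)))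
          = fun z => deriv^[i + 1] g z / z ^ (p - (i + 1)) := by
        funext z; rw [Function.iterate_succ_apply']
      rwa [this] at ht'
  intro i hip α hα
  obtain ⟨β, hβ, hsub, ht⟩ := main i hip α hα
  refine ⟨β, hβ, hsub, ?_⟩
  have hEq : ∀ z ∈ Delta α β, iteratedDerivWithin i f D z = deriv^[i] g z + iteratedDeriv i P z := by
    intro z hzΔ
    have hzD : z ∈ D := hsub hzΔ
    have hf_eq : f = g + P := by funext w; simp [hgdef]
    calc iteratedDerivWithin i f D z = iteratedDerivWithin i (g + P) D z := by rw [← hf_eq]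
      _ = iteratedDerivWithin i g D z + iteratedDerivWithin i P D z :=
          iteratedDerivWithin_add hzD hD.uniqueDiffOn ((hga.contDiffOn hD.uniqueDiffOn).contDiffWithinAt hzD)
            ((hPcont i).contDiffOn.contDiffWithinAt hzD)
      _ = deriv^[i] g z + iteratedDeriv i P z := by
          rw [iterDW_open hD i hzD, iterDW_open hD i hzD, iteratedDeriv_eq_iterate]
  have htendP : Tendsto (iteratedDeriv i P) (nhdsWithin 0 (Delta α β)) (nhds (a i)) := by
    have hc : Continuous (iteratedDeriv i P) :=
      (hPcont i).continuous_iteratedDeriv i le_rfl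
    have hval : iteratedDeriv i P 0 = a i := by
      rw [iteratedDeriv_eq_iterate, hPdef, poly_iter a p i hip]
      simpa using poly_val (fun j => a (i + j)) (p - i)
    exact hval ▸ ((hc.tendsto 0).mono_left nhdsWithin_le_nhds)
  have htendg : Tendsto (fun z => deriv^[i] g z) (nhdsWithin 0 (Delta α β)) (nhds 0) := by
    have t2 : Tendsto (fun z : ℂ => z ^ (p - i)) (nhdsWithin 0 (Delta α β))
        (nhds ((0 : ℂ) ^ (p - i))) :=
      ((continuous_pow (p - i)).tendsto 0).mono_left nhdsWithin_le_nhds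
    have t3 := ht.mul t2
    rw [zero_mul] at t3
    apply t3.congr'
    filter_upwards [self_mem_nhdsWithin] with z hz
    exact div_mul_cancel₀ _ (pow_ne_zero _ (Delta_ne_zero hz))
  have hsum := htendg.add htendP
  rw [zero_add] at hsum
  apply hsum.congr'
  filter_upwards [self_mem_nhdsWithin] with z hz
  exact (hEq z hz).symm
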